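/- arXiv:1806.05538 — 2 statements merged into one kernel-verified Lean document; each statement's English description precedes it below -/
import Mathlib

section
/- For all ZFC sets a, b, c, d, if the two-tuple ⟨a, b⟩ = {a, {a, b}} equals the two-tuple ⟨c, d⟩ = {c, {c, d}}, then a = c and b = d. (The proof uses the axiom of regularity to exclude the case a = {c, d} and c = {a, b}.) -/
/-- The two-tuple of ZFC sets `a` and `b` (Def. 2.17): `⟨a, b⟩ := {a, {a, b}}`. -/
def twoTuple (a b : ZFSet) : ZFSet := {a, {a, b}}

private lemma pair_eq_of_fst_eq {a b d : ZFSet} (h : twoTuple a b = twoTuple a d) :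
    b = d := by
  have hab : ({a, b} : ZFSet) ∈ twoTuple a d := by
    rw [← h]; simp [twoTuple, ZFSet.mem_pair]
  have had : ({a, d} : ZFSet) ∈ twoTuple a b := by
    rw [h]; simp [twoTuple, ZFSet.mem_pair]
  rw [twoTuple, ZFSet.mem_pair] at hab had
  rcases hab with hab | hab
  · -- {a, b} = a : a ∈ a, contradiction
    have : a ∈ ({a, b} : ZFSet) := ZFSet.mem_pair.2 (Or.inl rfl)
    rw [hab] at this
    exact absurd this (ZFSet.mem_irrefl a)
  · -- {a, b} = {a, d}
    have hb : b = a ∨ b = d := by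
      have : b ∈ ({a, d} : ZFSet) := hab ▸ ZFSet.mem_pair.2 (Or.inr rfl)
      exact ZFSet.mem_pair.1 this
    rcases hb with hb | hb
    · have : d ∈ ({a, b} : ZFSet) := hab ▸ ZFSet.mem_pair.2 (Or.inr rfl)
      rcases ZFSet.mem_pair.1 this with hd | hd
      · rw [hb, hd]
      · exact hd.symm
    · exact hb

theorem twoTuple_injective (a b c d : ZFSet)
    (h : twoTuple a b = twoTuple c d) : a = c ∧ b = d := by
  have ha : a ∈ twoTuple c d := by rw [← h]; simp [twoTuple, ZFSet.mem_pair]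
  rw [twoTuple, ZFSet.mem_pair] at ha
  have hc : c ∈ twoTuple a b := by rw [h]; simp [twoTuple, ZFSet.mem_pair]
  rw [twoTuple, ZFSet.mem_pair] at hc
  have hac : a = c := by
    rcases ha with ha | ha
    · exact ha
    · rcases hc with hc | hc
      · exact hc.symm
      · -- a = {c, d}, c = {a, b}: mutual membership, contradiction with regularity
        exfalso
        have h1 : c ∈ a := ha ▸ ZFSet.mem_pair.2 (Or.inl rfl)
        have h2 : a ∈ c := hc ▸ ZFSet.mem_pair.2 (Or.inl rfl)
        exact ZFSet.mem_asymm h2 h1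
  subst hac
  exact ⟨rfl, pair_eq_of_fst_eq h⟩
end

section
/- Uniqueness of the Zermelo ordinal set (Remark 2.9): for every ZFC set W, if ∅ ∈ W, and {α} ∈ W for every α ∈ W, and for every β ∈ W one has (there is no γ ∈ W with β = {γ}) if and only if β = ∅, then the elements of W are exactly the Zermelo numerals: for every ZFC set x, x ∈ W if and only if x = z n for some natural number n. In particular any two ZFC sets satisfying these three conditions are equal. (The proof that W contains nothing else uses the axiom of regularity to exclude infinite descending singleton chains.) -/
/-- The Zermelo numeral map: `z 0 = ∅` and `z (n+1) = {z n}`. -/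
def zermelo : ℕ → ZFSet
  | 0 => ∅
  | n + 1 => {zermelo n}

theorem zermelo_ordinal_set_unique (W : ZFSet)
    (h0 : (∅ : ZFSet) ∈ W)
    (hsucc : ∀ α ∈ W, ({α} : ZFSet) ∈ W)
    (hmin : ∀ β ∈ W, (¬ ∃ γ ∈ W, β = ({γ} : ZFSet)) ↔ β = ∅) :
    ∀ x : ZFSet, x ∈ W ↔ ∃ n : ℕ, x = zermelo n := by
  have hz : ∀ n : ℕ, zermelo n ∈ W := by
    intro n
    induction n with
    | zero => exact h0
    | succ n ih => exact hsucc _ ih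
  -- the bad set
  set S : ZFSet := ZFSet.sep (fun a => ¬ ∃ n : ℕ, a = zermelo n) W with hS
  have hSempty : S = ∅ := by
    by_contra hne
    obtain ⟨β, hβS, hβmin⟩ := ZFSet.regularity S hne
    obtain ⟨hβW, hβnz⟩ := ZFSet.mem_sep.mp hβS
    have hβne : β ≠ ∅ := fun h => hβnz ⟨0, h⟩
    obtain ⟨γ, hγW, hβγ⟩ := not_not.mp (fun h => hβne ((hmin β hβW).mp h))
    have hγnz : ¬ ∃ n : ℕ, γ = zermelo n := by
      rintro ⟨n, rfl⟩
      exact hβnz ⟨n + 1, hβγ⟩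
    have hγS : γ ∈ S := ZFSet.mem_sep.mpr ⟨hγW, hγnz⟩
    have hγβ : γ ∈ β := by rw [hβγ]; exact ZFSet.mem_singleton.mpr rfl
    have : γ ∈ S ∩ β := ZFSet.mem_inter.mpr ⟨hγS, hγβ⟩
    rw [hβmin] at this
    exact ZFSet.notMem_empty _ this
  intro x
  constructor
  · intro hx
    by_contra hnx
    have : x ∈ S := ZFSet.mem_sep.mpr ⟨hx, hnx⟩
    rw [hSempty] at this
    exact ZFSet.notMem_empty _ this
  · rintro ⟨n, rfl⟩; exact hz n
end
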